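/- (Local constancy of the critical cone under nondegeneracy.) Let g : ℝᵐ → ℝ ∪ {∞} be a polyhedral function and (z̄, λ̄) ∈ gph ∂g with λ̄ ∈ ri ∂g(z̄). Then there exists r > 0 such that for all (z, λ) ∈ (gph ∂g) ∩ B_r(z̄, λ̄) one has λ ∈ ri ∂g(z) and K_g(z, λ) = K_g(z̄, λ̄). -/

import Mathlib

/-!
Write `g` as `max_i (⟪a i, x⟫ - r i)` on a polyhedron `{x | ∀ j, ⟪c j, x⟫ ≤ d j}`. Near `z̄` only
the pieces and constraints active at `z̄` matter, so `g` is conic around `z̄`; testing a subgradient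
at `z` against `z̄` and against the reflected point `2z - z̄` shows that `∂g(z)` is the face of
`∂g(z̄)` exposed by `z - z̄`. A face that contains a point close to `λ̄ ∈ ri ∂g(z̄)` contains a
relative interior point and is therefore all of `∂g(z̄)`. Hence `∂g(z) = ∂g(z̄)` near `(z̄, λ̄)`.
Finally `K_g(z, λ) = N_{∂g(z)}(λ)`, and the normal cone of a set is the same at all of its
relative interior points, because a linear functional maximised at such a point is constant.
-/

open Filter Topology Set Metric

noncomputable section

/-- A polyhedral convex set: a finite intersection of closed half-spaces. -/
def IsPolyhedralSet {E : Type*} [AddCommGroup E] [Module ℝ E] (C : Set E) : Prop :=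
  ∃ (s : ℕ) (b : Fin s → (E →ₗ[ℝ] ℝ)) (β : Fin s → ℝ), C = {x | ∀ i, b i x ≤ β i}

/-- A polyhedral function: proper (never `⊥`, somewhere finite) with polyhedral epigraph. -/
def IsPolyhedralFn {E : Type*} [AddCommGroup E] [Module ℝ E] (g : E → EReal) : Prop :=
  (∃ z, g z ≠ ⊤) ∧ (∀ z, g z ≠ ⊥) ∧
    IsPolyhedralSet {p : E × ℝ | g p.1 ≤ (p.2 : EReal)}

/-- Tangent cone to a convex set: closure of the cone of feasible directions. -/
def tcone {E : Type*} [NormedAddCommGroup E] [NormedSpace ℝ E] (C : Set E) (x : E) : Set E :=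
  closure {w | ∃ t : ℝ, 0 < t ∧ x + t • w ∈ C}

/-- Convex subdifferential of an extended-real-valued function. -/
def subdiff {E : Type*} [NormedAddCommGroup E] [InnerProductSpace ℝ E]
    (g : E → EReal) (z : E) : Set E :=
  {v | ∀ x, g z + ((inner ℝ v (x - z) : ℝ) : EReal) ≤ g x}

/-- Subderivative: `dg(z)(w) = liminf_{t↓0, w'→w} (g(z+tw')-g(z))/t`. -/
def subderiv {E : Type*} [NormedAddCommGroup E] [NormedSpace ℝ E]
    (g : E → EReal) (z : E) (w : E) : EReal :=
  Filter.liminf (fun p : ℝ × E => (g (z + p.1 • p.2) - g z) * (((p.1)⁻¹ : ℝ) : EReal))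
    ((nhdsWithin 0 (Set.Ioi (0 : ℝ))) ×ˢ 𝓝 w)

/-- Critical cone `K_g(z,v) = {w | dg(z)(w) = ⟨v,w⟩}`. -/
def Kcone {E : Type*} [NormedAddCommGroup E] [InnerProductSpace ℝ E]
    (g : E → EReal) (z v : E) : Set E :=
  {w | subderiv g z w = ((inner ℝ v w : ℝ) : EReal)}

/-- Normal cone of convex analysis. -/
def ncone {E : Type*} [NormedAddCommGroup E] [InnerProductSpace ℝ E]
    (C : Set E) (x : E) : Set E :=
  {v | ∀ y ∈ C, (inner ℝ v (y - x) : ℝ) ≤ 0}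

/-- A set is a linear subspace. -/
def IsLinSubspace {E : Type*} [AddCommGroup E] [Module ℝ E] (K : Set E) : Prop :=
  ∃ S : Submodule ℝ E, K = ↑S

/-- Polar cone. -/
def polarCone {E : Type*} [NormedAddCommGroup E] [InnerProductSpace ℝ E] (K : Set E) : Set E :=
  {u | ∀ w ∈ K, (inner ℝ u w : ℝ) ≤ 0}

/-- Fenchel conjugate. -/
def fconj {E : Type*} [NormedAddCommGroup E] [InnerProductSpace ℝ E]
    (g : E → EReal) (v : E) : EReal :=
  ⨆ z, ((inner ℝ v z : ℝ) : EReal) - g z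

/-- Bouligand (contingent) tangent cone, via sequences. -/
def btcone {E : Type*} [NormedAddCommGroup E] [NormedSpace ℝ E] (Ω : Set E) (x : E) : Set E :=
  {w | ∃ (t : ℕ → ℝ) (v : ℕ → E), (∀ n, 0 < t n) ∧ Tendsto t atTop (𝓝 0) ∧
      Tendsto v atTop (𝓝 w) ∧ ∀ n, x + t n • v n ∈ Ω}

/-- Clarke (regular) tangent cone, via sequences. -/
def clarkeT {E : Type*} [NormedAddCommGroup E] [NormedSpace ℝ E] (Ω : Set E) (xb : E) : Set E :=
  {w | ∀ (x : ℕ → E) (t : ℕ → ℝ), (∀ n, x n ∈ Ω) → Tendsto x atTop (𝓝 xb) →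
      (∀ n, 0 < t n) → Tendsto t atTop (𝓝 0) →
      ∃ v : ℕ → E, Tendsto v atTop (𝓝 w) ∧ ∀ n, x n + t n • v n ∈ Ω}

/-- Paratingent cone, via sequences. -/
def paraT {E : Type*} [NormedAddCommGroup E] [NormedSpace ℝ E] (Ω : Set E) (xb : E) : Set E :=
  {w | ∃ (x : ℕ → E) (t : ℕ → ℝ) (v : ℕ → E), (∀ n, x n ∈ Ω) ∧ Tendsto x atTop (𝓝 xb) ∧
      (∀ n, 0 < t n) ∧ Tendsto t atTop (𝓝 0) ∧ Tendsto v atTop (𝓝 w) ∧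
      ∀ n, x n + t n • v n ∈ Ω}

open RealInnerProductSpace

section IntrinsicInterior

variable {E : Type*} [NormedAddCommGroup E] [NormedSpace ℝ E] {C : Set E} {x : E}

theorem eventually_mem_intrinsicInterior (hx : x ∈ intrinsicInterior ℝ C) :
    ∀ᶠ y in 𝓝[affineSpan ℝ C] x, y ∈ intrinsicInterior ℝ C := by
  obtain ⟨x', hx', rfl⟩ := mem_intrinsicInterior.1 hx
  rw [← eventually_nhds_subtype_iff]
  exact (isOpen_interior.eventually_mem hx').mono fun y hy => mem_image_of_mem _ hy

theorem LinearMap.eq_of_le_of_mem_intrinsicInterior (f : E →ₗ[ℝ] ℝ)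
    (hx : x ∈ intrinsicInterior ℝ C) (hmax : ∀ y ∈ C, f y ≤ f x) {y : E} (hy : y ∈ C) :
    f y = f x := by
  have hline : Tendsto (AffineMap.lineMap y x) (𝓝[>] (1 : ℝ)) (𝓝[affineSpan ℝ C] x) := by
    refine tendsto_nhdsWithin_iff.2 ⟨?_, Eventually.of_forall fun t => ?_⟩
    · have := (AffineMap.lineMap_continuous (p := y) (q := x)).tendsto (1 : ℝ)
      rw [AffineMap.lineMap_apply_one] at this
      exact this.mono_left nhdsWithin_le_nhds
    · exact AffineMap.lineMap_mem t (subset_affineSpan ℝ C hy)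
        (subset_affineSpan ℝ C (intrinsicInterior_subset hx))
  obtain ⟨t, htC, ht⟩ :=
    ((hline.eventually (eventually_mem_intrinsicInterior hx)).and self_mem_nhdsWithin).exists
  have hle := hmax _ (intrinsicInterior_subset htC)
  rw [AffineMap.lineMap_apply_module, map_add, map_smul, map_smul, smul_eq_mul,
    smul_eq_mul] at hle
  have ht : (1 : ℝ) < t := ht
  nlinarith [hmax y hy]

end IntrinsicInterior

section NormalCone

variable {E : Type*} [NormedAddCommGroup E] [InnerProductSpace ℝ E] {C : Set E} {l l' : E}

theorem ncone_subset_of_mem_intrinsicInterior (hl : l ∈ intrinsicInterior ℝ C) (hl' : l' ∈ C) :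
    ncone C l ⊆ ncone C l' := by
  intro u hu y hy
  have hmax : ∀ y ∈ C, innerₛₗ ℝ u y ≤ innerₛₗ ℝ u l := fun y hy => by
    simpa [inner_sub_right] using hu y hy
  have hy := (innerₛₗ ℝ u).eq_of_le_of_mem_intrinsicInterior hl hmax hy
  have hl' := (innerₛₗ ℝ u).eq_of_le_of_mem_intrinsicInterior hl hmax hl'
  simp only [innerₛₗ_apply_apply] at hy hl'
  rw [inner_sub_right, hy, hl', sub_self]

theorem ncone_eq_of_mem_intrinsicInterior (hl : l ∈ intrinsicInterior ℝ C)
    (hl' : l' ∈ intrinsicInterior ℝ C) : ncone C l = ncone C l' :=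
  (ncone_subset_of_mem_intrinsicInterior hl (intrinsicInterior_subset hl')).antisymm
    (ncone_subset_of_mem_intrinsicInterior hl' (intrinsicInterior_subset hl))

end NormalCone

section Subgradient

variable {E : Type*} [NormedAddCommGroup E] [InnerProductSpace ℝ E] {g : E → EReal} {z v : E}

theorem ne_top_of_mem_subdiff (hg : ∃ x, g x ≠ ⊤) (hv : v ∈ subdiff g z) : g z ≠ ⊤ := by
  obtain ⟨x, hx⟩ := hg
  intro hz
  have := hv x
  rw [hz, EReal.top_add_of_ne_bot (EReal.coe_ne_bot _), top_le_iff] at this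
  exact hx this

theorem inner_le_subderiv (hz : g z ≠ ⊤) (hz' : g z ≠ ⊥) (hv : v ∈ subdiff g z) (w : E) :
    ((⟪v, w⟫ : ℝ) : EReal) ≤ subderiv g z w := by
  set μ := (g z).toReal
  have hμ : g z = μ := (EReal.coe_toReal hz hz').symm
  have hquot : ∀ᶠ p : ℝ × E in 𝓝[>] 0 ×ˢ 𝓝 w,
      ((⟪v, p.2⟫ : ℝ) : EReal) ≤ (g (z + p.1 • p.2) - g z) * ((p.1⁻¹ : ℝ) : EReal) := by
    filter_upwards [prod_mem_prod self_mem_nhdsWithin univ_mem] with ⟨t, w'⟩ ht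
    have ht : 0 < t := ht.1
    have hsub : ((μ + t * ⟪v, w'⟫ : ℝ) : EReal) ≤ g (z + t • w') := by
      simpa [hμ, real_inner_smul_right] using hv (z + t • w')
    calc ((⟪v, w'⟫ : ℝ) : EReal)
        = (((μ + t * ⟪v, w'⟫ : ℝ) : EReal) - μ) * ((t⁻¹ : ℝ) : EReal) := by
          rw [← EReal.coe_sub, ← EReal.coe_mul]
          congr 1
          field_simp
          ring
      _ ≤ (g (z + t • w') - g z) * ((t⁻¹ : ℝ) : EReal) := by
          rw [hμ]
          exact mul_le_mul_of_nonneg_right (EReal.sub_le_sub hsub le_rfl)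
            (EReal.coe_nonneg.2 (inv_nonneg.2 ht.le))
  have hlim : Tendsto (fun p : ℝ × E => ((⟪v, p.2⟫ : ℝ) : EReal)) (𝓝[>] 0 ×ˢ 𝓝 w)
      (𝓝 ((⟪v, w⟫ : ℝ) : EReal)) :=
    EReal.tendsto_coe.2 (((continuous_const.inner continuous_id).tendsto w).comp tendsto_snd)
  exact hlim.liminf_eq.symm.trans_le (liminf_le_liminf hquot)

end Subgradient

section MaxAffine

variable {E : Type*} [NormedAddCommGroup E] [InnerProductSpace ℝ E] {ι κ : Type*}

/-- `g` is `max_i (⟪a i, x⟫ - r i)` on the polyhedron `{x | ∀ j, ⟪c j, x⟫ ≤ d j}` and `⊤` off it. -/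
def PolyhedralRepr (g : E → EReal) (a : ι → E) (r : ι → ℝ) (c : κ → E) (d : κ → ℝ) : Prop :=
  ∀ x (α : ℝ), g x ≤ α ↔ (∀ i, ⟪a i, x⟫ - r i ≤ α) ∧ ∀ j, ⟪c j, x⟫ ≤ d j

variable [Fintype ι] [Nonempty ι]

def maxAffine (a : ι → E) (r : ι → ℝ) (x : E) : ℝ :=
  Finset.univ.sup' Finset.univ_nonempty fun i => ⟪a i, x⟫ - r i

theorem le_maxAffine (a : ι → E) (r : ι → ℝ) (x : E) (i : ι) :
    ⟪a i, x⟫ - r i ≤ maxAffine a r x :=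
  Finset.le_sup' (fun i => ⟪a i, x⟫ - r i) (Finset.mem_univ i)

theorem exists_maxAffine_eq (a : ι → E) (r : ι → ℝ) (x : E) :
    ∃ i, maxAffine a r x = ⟪a i, x⟫ - r i := by
  obtain ⟨i, -, hi⟩ := Finset.exists_mem_eq_sup' Finset.univ_nonempty fun i => ⟪a i, x⟫ - r i
  exact ⟨i, hi⟩

theorem continuous_maxAffine (a : ι → E) (r : ι → ℝ) : Continuous (maxAffine a r) :=
  Continuous.finset_sup'_apply _ fun _ _ => (continuous_const.inner continuous_id).sub
    continuous_const

namespace PolyhedralRepr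

variable {g : E → EReal} {a : ι → E} {r : ι → ℝ} {c : κ → E} {d : κ → ℝ}
  (h : PolyhedralRepr g a r c d)
include h

theorem le_coe_iff {x : E} {α : ℝ} :
    g x ≤ α ↔ maxAffine a r x ≤ α ∧ ∀ j, ⟪c j, x⟫ ≤ d j := by
  simp [h x α, maxAffine, Finset.sup'_le_iff]

theorem apply_eq_of_forall_le {x : E} (hx : ∀ j, ⟪c j, x⟫ ≤ d j) : g x = maxAffine a r x := by
  refine le_antisymm (h.le_coe_iff.2 ⟨le_rfl, hx⟩) (not_lt.1 fun hlt => ?_)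
  obtain ⟨α, hgα, hαM⟩ := EReal.lt_iff_exists_real_btwn.1 hlt
  exact (EReal.coe_lt_coe_iff.1 hαM).not_ge (h.le_coe_iff.1 hgα.le).1

theorem ne_top_iff {x : E} : g x ≠ ⊤ ↔ ∀ j, ⟪c j, x⟫ ≤ d j := by
  refine ⟨fun hx => ?_, fun hx => by simp [h.apply_eq_of_forall_le hx]⟩
  obtain ⟨α, hgα, -⟩ := EReal.lt_iff_exists_real_btwn.1 (lt_top_iff_ne_top.2 hx)
  exact (h.le_coe_iff.1 hgα.le).2

theorem apply_eq {x : E} (hx : g x ≠ ⊤) : g x = maxAffine a r x :=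
  h.apply_eq_of_forall_le (h.ne_top_iff.1 hx)

theorem mem_subdiff_iff {z v : E} (hz : g z ≠ ⊤) :
    v ∈ subdiff g z ↔ ∀ x, g x ≠ ⊤ → maxAffine a r z + ⟪v, x - z⟫ ≤ maxAffine a r x := by
  refine forall_congr' fun x => ?_
  by_cases hx : g x = ⊤
  · simp [hx]
  · rw [h.apply_eq hz, h.apply_eq hx, ← EReal.coe_add, EReal.coe_le_coe_iff]
    exact ⟨fun hle _ => hle, fun hle => hle (EReal.coe_ne_top _)⟩

theorem mem_subdiff_iff_of_inner_eq {z z' v : E} (hz : g z ≠ ⊤) (hz' : g z' ≠ ⊤)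
    (hv : ⟪v, z - z'⟫ = maxAffine a r z - maxAffine a r z') :
    v ∈ subdiff g z ↔ v ∈ subdiff g z' := by
  rw [h.mem_subdiff_iff hz, h.mem_subdiff_iff hz']
  refine forall₂_congr fun x _ => ?_
  have hsplit : ⟪v, x - z'⟫ = ⟪v, x - z⟫ + ⟪v, z - z'⟫ := by
    rw [← inner_add_right, sub_add_sub_cancel]
  constructor <;> intro hle <;> linarith

theorem mem_subdiff_of_active {z : E} (hz : g z ≠ ⊤) {i : ι}
    (hi : ⟪a i, z⟫ - r i = maxAffine a r z) : a i ∈ subdiff g z := by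
  refine (h.mem_subdiff_iff hz).2 fun x _ => ?_
  rw [inner_sub_right]
  linarith [le_maxAffine a r x i]

theorem add_mem_subdiff_of_active {z v : E} (hz : g z ≠ ⊤) {j : κ} (hj : ⟪c j, z⟫ = d j)
    (hv : v ∈ subdiff g z) : v + c j ∈ subdiff g z := by
  refine (h.mem_subdiff_iff hz).2 fun x hx => ?_
  have hcx := h.ne_top_iff.1 hx j
  rw [inner_add_left, inner_sub_right (c j)]
  linarith [(h.mem_subdiff_iff hz).1 hv x hx]

theorem eventually_ne_top_and_exists_active [Finite κ] {z : E} (hz : g z ≠ ⊤) :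
    ∀ᶠ y in 𝓝 z, (∀ j, ⟪c j, z⟫ = d j → ⟪c j, y⟫ ≤ d j) →
      g y ≠ ⊤ ∧ ∃ i, ⟪a i, z⟫ - r i = maxAffine a r z ∧ maxAffine a r y = ⟪a i, y⟫ - r i := by
  have hcont : ∀ u : E, Continuous fun y => ⟪u, y⟫ := fun u => continuous_const.inner continuous_id
  have hc : ∀ᶠ y in 𝓝 z, ∀ j, ⟪c j, z⟫ ≠ d j → ⟪c j, y⟫ < d j := by
    refine eventually_all.2 fun j => ?_
    by_cases hj : ⟪c j, z⟫ = d j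
    · exact Eventually.of_forall fun _ hne => absurd hj hne
    · exact (((hcont (c j)).tendsto z).eventually_lt tendsto_const_nhds
        ((h.ne_top_iff.1 hz j).lt_of_ne hj)).mono fun _ hy _ => hy
  have ha : ∀ᶠ y in 𝓝 z, ∀ i, ⟪a i, z⟫ - r i ≠ maxAffine a r z →
      ⟪a i, y⟫ - r i < maxAffine a r y := by
    refine eventually_all.2 fun i => ?_
    by_cases hi : ⟪a i, z⟫ - r i = maxAffine a r z
    · exact Eventually.of_forall fun _ hne => absurd hi hne
    · exact ((((hcont (a i)).sub continuous_const).tendsto z).eventually_lt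
        ((continuous_maxAffine a r).tendsto z) ((le_maxAffine a r z i).lt_of_ne hi)).mono
        fun _ hy _ => hy
  filter_upwards [hc, ha] with y hcy hay hactive
  refine ⟨h.ne_top_iff.2 fun j => ?_, ?_⟩
  · by_cases hj : ⟪c j, z⟫ = d j
    · exact hactive j hj
    · exact (hcy j hj).le
  · obtain ⟨i, hi⟩ := exists_maxAffine_eq a r y
    exact ⟨i, not_not.1 fun hne => (hay i hne).ne hi.symm, hi⟩

theorem subderiv_le [Finite κ] {z w : E} {β : ℝ} (hz : g z ≠ ⊤)
    (ha : ∀ i, ⟪a i, z⟫ - r i = maxAffine a r z → ⟪a i, w⟫ ≤ β)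
    (hc : ∀ j, ⟪c j, z⟫ = d j → ⟪c j, w⟫ ≤ 0) :
    subderiv g z w ≤ β := by
  have hray : Tendsto (fun t : ℝ => z + t • w) (𝓝[>] 0) (𝓝 z) := by
    have : Continuous fun t : ℝ => z + t • w :=
      continuous_const.add (continuous_id.smul continuous_const)
    simpa using (this.tendsto 0).mono_left nhdsWithin_le_nhds
  have hquot : ∀ᶠ t in 𝓝[>] (0 : ℝ), (g (z + t • w) - g z) * ((t⁻¹ : ℝ) : EReal) ≤ β := by
    filter_upwards [hray.eventually (h.eventually_ne_top_and_exists_active hz),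
      self_mem_nhdsWithin] with t hlocal ht
    have ht : 0 < t := ht
    have hinner : ∀ u : E, ⟪u, z + t • w⟫ = ⟪u, z⟫ + t * ⟪u, w⟫ := fun u => by
      rw [inner_add_right, real_inner_smul_right]
    obtain ⟨hne, i, hi, hM⟩ := hlocal fun j hj => by
      rw [hinner, hj]
      nlinarith [hc j hj]
    rw [h.apply_eq hne, h.apply_eq hz, ← EReal.coe_sub, ← EReal.coe_mul, EReal.coe_le_coe_iff,
      hM, hinner, ← hi, mul_inv_le_iff₀ ht]
    nlinarith [ha i hi]
  have hpath : Tendsto (fun t : ℝ => (t, w)) (𝓝[>] 0) (𝓝[>] 0 ×ˢ 𝓝 w) :=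
    tendsto_id.prodMk tendsto_const_nhds
  exact liminf_le_of_frequently_le' (hpath.frequently hquot.frequently)

theorem kcone_eq_ncone [Finite κ] {z l : E} (hz : g z ≠ ⊤) (hl : l ∈ subdiff g z) :
    Kcone g z l = ncone (subdiff g z) l := by
  have hz' : g z ≠ ⊥ := by simp [h.apply_eq hz]
  ext w
  constructor
  · intro hw v hv
    have hle := inner_le_subderiv hz hz' hv w
    rw [show subderiv g z w = ((⟪l, w⟫ : ℝ) : EReal) from hw, EReal.coe_le_coe_iff] at hle
    rw [real_inner_comm, inner_sub_left]
    linarith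
  · intro hw
    refine le_antisymm (h.subderiv_le hz (fun i hi => ?_) fun j hj => ?_)
      (inner_le_subderiv hz hz' hl w)
    · have := hw _ (h.mem_subdiff_of_active hz hi)
      rw [inner_sub_right] at this
      linarith [real_inner_comm (a i) w, real_inner_comm l w]
    · simpa [real_inner_comm] using hw _ (h.add_mem_subdiff_of_active hz hj hl)

/-- Test the subgradient at `zb` and at the reflected point `z + (z - zb)`, where `g` is
controlled by a piece active at `zb`. -/
theorem eventually_subdiff_subset [Finite κ] {zb : E} (hzb : g zb ≠ ⊤) :
    ∀ᶠ z in 𝓝 zb, ∀ v ∈ subdiff g z,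
      ⟪v, z - zb⟫ = maxAffine a r z - maxAffine a r zb ∧ v ∈ subdiff g zb := by
  have hreflect : Tendsto (fun z : E => z + (z - zb)) (𝓝 zb) (𝓝 zb) := by
    have : Continuous fun z : E => z + (z - zb) :=
      continuous_id.add (continuous_id.sub continuous_const)
    simpa using this.tendsto zb
  filter_upwards [hreflect.eventually (h.eventually_ne_top_and_exists_active hzb)]
    with z hlocal v hv
  have hz := ne_top_of_mem_subdiff ⟨zb, hzb⟩ hv
  have hinner : ∀ u : E, ⟪u, z + (z - zb)⟫ = 2 * ⟪u, z⟫ - ⟪u, zb⟫ := fun u => by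
    rw [inner_add_right, inner_sub_right]
    ring
  obtain ⟨hne, i, hi, hM⟩ := hlocal fun j hj => by
    rw [hinner, hj]
    linarith [h.ne_top_iff.1 hz j]
  have hreflected : maxAffine a r (z + (z - zb)) ≤ 2 * maxAffine a r z - maxAffine a r zb := by
    rw [hM, hinner, ← hi]
    linarith [le_maxAffine a r z i]
  have hsub := (h.mem_subdiff_iff hz).1 hv
  have hupper := hsub _ hne
  have hlower := hsub _ hzb
  rw [add_sub_cancel_left] at hupper
  rw [← neg_sub, inner_neg_right] at hlower
  have heq : ⟪v, z - zb⟫ = maxAffine a r z - maxAffine a r zb := by linarith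
  exact ⟨heq, (h.mem_subdiff_iff_of_inner_eq hz hzb heq).1 hv⟩

/-- Near `zb`, `subdiff g z` is a face of `subdiff g zb`; a face containing a relative interior
point is the whole set. -/
theorem eventually_subdiff_eq [Finite κ] {zb lb : E} (hzb : g zb ≠ ⊤)
    (hlb : lb ∈ intrinsicInterior ℝ (subdiff g zb)) :
    ∀ᶠ p : E × E in 𝓝 (zb, lb), p.2 ∈ subdiff g p.1 →
      subdiff g p.1 = subdiff g zb ∧ p.2 ∈ intrinsicInterior ℝ (subdiff g zb) := by
  have hface := (continuous_fst.tendsto (zb, lb)).eventually (h.eventually_subdiff_subset hzb)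
  have hri := (continuous_snd.tendsto (zb, lb)).eventually
    (eventually_nhdsWithin_iff.1 (eventually_mem_intrinsicInterior hlb))
  filter_upwards [hface, hri] with ⟨z, l⟩ hface hri hl
  dsimp only at hface hri hl ⊢
  obtain ⟨hlface, hlC⟩ := hface l hl
  have hlri := hri (subset_affineSpan ℝ _ hlC)
  have hz := ne_top_of_mem_subdiff ⟨zb, hzb⟩ hl
  refine ⟨subset_antisymm (fun v hv => (hface v hv).2) fun v hv => ?_, hlri⟩
  have hmax : ∀ y ∈ subdiff g zb, innerₛₗ ℝ (z - zb) y ≤ innerₛₗ ℝ (z - zb) l := by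
    intro y hy
    have := (h.mem_subdiff_iff hzb).1 hy z hz
    rw [innerₛₗ_apply_apply, innerₛₗ_apply_apply, real_inner_comm y, real_inner_comm l]
    linarith
  have heq := (innerₛₗ ℝ (z - zb)).eq_of_le_of_mem_intrinsicInterior hlri hmax hv
  rw [innerₛₗ_apply_apply, innerₛₗ_apply_apply, real_inner_comm v, real_inner_comm l,
    hlface] at heq
  exact (h.mem_subdiff_iff_of_inner_eq hz hzb heq).2 hv

end PolyhedralRepr

end MaxAffine

section Representation

variable {E : Type*} [NormedAddCommGroup E] [InnerProductSpace ℝ E] [FiniteDimensional ℝ E]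

theorem LinearMap.exists_eq_inner (f : E →ₗ[ℝ] ℝ) : ∃ u : E, ∀ x, f x = ⟪u, x⟫ :=
  ⟨(InnerProductSpace.toDual ℝ E).symm (LinearMap.toContinuousLinearMap f), fun x => by
    rw [InnerProductSpace.toDual_symm_apply, LinearMap.coe_toContinuousLinearMap']⟩

/-- Write each half-space of the epigraph as `⟪u i, x⟫ + α * γ i ≤ β i`. Properness forces
`γ i ≤ 0`; the half-spaces with `γ i < 0` give the affine pieces and those with `γ i = 0` the
constraints of the domain. -/
theorem IsPolyhedralFn.exists_polyhedralRepr {g : E → EReal} (hg : IsPolyhedralFn g) :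
    ∃ (ι κ : Type) (_ : Fintype ι) (_ : Nonempty ι) (_ : Fintype κ) (a : ι → E) (r : ι → ℝ)
      (c : κ → E) (d : κ → ℝ), PolyhedralRepr g a r c d := by
  classical
  obtain ⟨⟨z0, hz0⟩, hbot, s, b, β, hepi⟩ := hg
  choose u hu using fun i => ((b i).comp (LinearMap.inl ℝ E ℝ)).exists_eq_inner
  set γ : Fin s → ℝ := fun i => b i (0, 1)
  have hb : ∀ i x (α : ℝ), b i (x, α) = ⟪u i, x⟫ + α * γ i := fun i x α => by
    rw [← hu, show ((x, α) : E × ℝ) = (x, 0) + α • (0, 1) by simp, map_add, map_smul,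
      smul_eq_mul, mul_comm]
    rfl
  have hle : ∀ x (α : ℝ), g x ≤ α ↔ ∀ i, ⟪u i, x⟫ + α * γ i ≤ β i := fun x α => by
    simpa [hb] using Set.ext_iff.1 hepi (x, α)
  set α0 := (g z0).toReal
  have hα0 : ∀ α, α0 ≤ α → g z0 ≤ α := fun α hα => by
    rw [← EReal.coe_toReal hz0 (hbot z0)]
    exact_mod_cast hα
  have hγ : ∀ i, γ i ≤ 0 := fun i => not_lt.1 fun hpos => by
    have hfeas : ∀ᶠ α in atTop, ⟪u i, z0⟫ + α * γ i ≤ β i :=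
      (eventually_ge_atTop α0).mono fun α hα => (hle z0 α).1 (hα0 α hα) i
    have hbig : ∀ᶠ α in atTop, β i < ⟪u i, z0⟫ + α * γ i :=
      (tendsto_atTop_add_const_left _ _ (tendsto_id.atTop_mul_const hpos)).eventually_gt_atTop _
    obtain ⟨α, h1, h2⟩ := (hfeas.and hbig).exists
    linarith
  refine ⟨{i // γ i < 0}, {i // γ i = 0}, inferInstance, ?_, inferInstance,
    fun i => (-γ i)⁻¹ • u i, fun i => β i / -γ i, fun j => u j, fun j => β j, ?_⟩
  · by_contra hempty
    have hγ0 : ∀ i, γ i = 0 := fun i => (hγ i).eq_of_not_lt fun hi => hempty ⟨⟨i, hi⟩⟩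
    have := (hle z0 (α0 - 1)).2 fun i => by simpa [hγ0] using (hle z0 α0).1 (hα0 α0 le_rfl) i
    rw [← EReal.coe_toReal hz0 (hbot z0), EReal.coe_le_coe_iff] at this
    linarith
  · intro x α
    have hpiece : ∀ i, γ i < 0 →
        (⟪u i, x⟫ + α * γ i ≤ β i ↔ ⟪(-γ i)⁻¹ • u i, x⟫ - β i / -γ i ≤ α) := fun i hi => by
      rw [real_inner_smul_left, ← div_eq_inv_mul, ← sub_div, div_le_iff₀ (neg_pos.2 hi)]
      constructor <;> intro <;> linarith
    rw [hle]
    refine ⟨fun H => ⟨fun i => (hpiece i i.2).1 (H i), fun j => by simpa [j.2] using H j⟩,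
      fun ⟨H1, H2⟩ i => ?_⟩
    rcases (hγ i).lt_or_eq with hi | hi
    · exact (hpiece i hi).2 (H1 ⟨i, hi⟩)
    · simpa [hi] using H2 ⟨i, hi⟩

end Representation

/-- local constancy of the critical cone under nondegeneracy. -/
theorem stmt9 {m : ℕ} (g : EuclideanSpace ℝ (Fin m) → EReal) (hg : IsPolyhedralFn g)
    (zb lb : EuclideanSpace ℝ (Fin m)) (hl : lb ∈ subdiff g zb)
    (hri : lb ∈ intrinsicInterior ℝ (subdiff g zb)) :
    ∃ r > (0 : ℝ), ∀ z l : EuclideanSpace ℝ (Fin m), l ∈ subdiff g z →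
      dist (z, l) (zb, lb) ≤ r →
      l ∈ intrinsicInterior ℝ (subdiff g z) ∧ Kcone g z l = Kcone g zb lb := by
  obtain ⟨ι, κ, _, _, _, a, r, c, d, h⟩ := hg.exists_polyhedralRepr
  have hzb := ne_top_of_mem_subdiff hg.1 hl
  obtain ⟨ε, hε, hnear⟩ := Metric.eventually_nhds_iff.1 (h.eventually_subdiff_eq hzb hri)
  refine ⟨ε / 2, half_pos hε, fun z l hlz hdist => ?_⟩
  obtain ⟨hsub, hlri⟩ := hnear (hdist.trans_lt (half_lt_self hε)) hlz
  refine ⟨hsub ▸ hlri, ?_⟩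
  rw [h.kcone_eq_ncone (ne_top_of_mem_subdiff hg.1 hlz) hlz, h.kcone_eq_ncone hzb hl, hsub]
  exact ncone_eq_of_mem_intrinsicInterior hlri hri
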